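/- If a weighted graph (Γ,μ) satisfies (p0), (VD) and (TC), then there are constants c>0 and β>1 such that the local sub-Gaussian kernel k̲=k̲(x,n,R) satisfies k̲+1 ≥ c·(E(x,R)/n)^{1/(β−1)} for all x∈Γ and all R,n>0. -/

import Mathlib

open Classical

noncomputable section

/-- A weighted graph: symmetric nonnegative edge weights, zero on the diagonal,
positive exactly on edges, with finitely many neighbours at each vertex. -/
structure WeightedGraph (V : Type*) where
  w : V → V → ℝ
  w_symm : ∀ x y, w x y = w y x
  w_nonneg : ∀ x y, 0 ≤ w x y
  w_irrefl : ∀ x, w x x = 0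
  locFin : ∀ x, {y | 0 < w x y}.Finite

/-- A space-time scale function is proper. -/
def properF (F : ℕ → ℝ) : Prop :=
  StrictMono F ∧
  (∃ D : ℝ, 0 < D ∧ ∀ R : ℕ, F (2 * R) ≤ D * F R) ∧
  (∀ R S : ℕ, F R + F S ≤ F (R + S)) ∧
  (∃ (A : ℕ) (B : ℝ), 1 < A ∧ 1 < B ∧ ∀ R : ℕ, B * F R ≤ F (A * R)) ∧
  (∃ c : ℝ, 0 < c ∧ ∀ R : ℕ, c * (R : ℝ) ^ 2 ≤ F R)

/-- A proper scale function satisfying the strong anti-doubling property `B_F > A_F`. -/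
def veryProperF (F : ℕ → ℝ) : Prop :=
  properF F ∧
  (∃ (A : ℕ) (B : ℝ), 1 < A ∧ (A : ℝ) < B ∧ ∀ R : ℕ, B * F R ≤ F (A * R))

/-- The (generalized) inverse of a scale function. -/
def finvF (F : ℕ → ℝ) (t : ℝ) : ℕ := sInf {R : ℕ | t ≤ F R}

/-- The sub-Gaussian kernel `k(n,R)`: the maximal integer `k ≥ 1` with
`n/k ≤ F(⌊R/k⌋)`, and `0` if there is none. -/
def kkerF (F : ℕ → ℝ) (n R : ℕ) : ℕ :=
  sSup {k : ℕ | 1 ≤ k ∧ (n : ℝ) / (k : ℝ) ≤ F (R / k)}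

namespace WeightedGraph

variable {V : Type*}

/-- The underlying simple graph. -/
def toSimpleGraph (G : WeightedGraph V) : SimpleGraph V where
  Adj x y := 0 < G.w x y
  symm := by
    constructor
    intro x y h
    rw [G.w_symm y x]
    exact h
  loopless := by
    constructor
    intro x h
    rw [G.w_irrefl x] at h
    exact lt_irrefl 0 h

/-- The graph (shortest path) distance. -/
def gdist (G : WeightedGraph V) (x y : V) : ℕ := G.toSimpleGraph.dist x y

/-- The open metric ball `B(x,r) = {y : d(x,y) < r}`. -/
def ball (G : WeightedGraph V) (x : V) (r : ℝ) : Set V := {y | (G.gdist x y : ℝ) < r}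

/-- The sphere `S(x,R) = {y : d(x,y) = R}`. -/
def sphere (G : WeightedGraph V) (x : V) (R : ℕ) : Set V := {y | G.gdist x y = R}

/-- The external boundary of a set. -/
def extBoundary (G : WeightedGraph V) (A : Set V) : Set V :=
  {y | y ∉ A ∧ ∃ x ∈ A, 0 < G.w x y}

/-- The vertex measure `μ(x) = Σ_{y ∼ x} μ_{xy}`. -/
def mu (G : WeightedGraph V) (x : V) : ℝ := ∑' y, G.w x y

/-- The volume `V(x,r) = μ(B(x,r))`. -/
def vol (G : WeightedGraph V) (x : V) (r : ℝ) : ℝ := ∑' y : G.ball x r, G.mu y.1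

/-- The volume of the annulus `v(x,s,r) = V(x,r) - V(x,s)`. -/
def annv (G : WeightedGraph V) (x : V) (s r : ℝ) : ℝ := G.vol x r - G.vol x s

/-- One-step transition probability `P(x,y) = μ_{xy}/μ(x)`. -/
def Pstep (G : WeightedGraph V) (x y : V) : ℝ := G.w x y / G.mu x

/-- `n`-step transition probability. -/
def Pn (G : WeightedGraph V) : ℕ → V → V → ℝ
  | 0, x, y => if x = y then 1 else 0
  | n + 1, x, y => ∑' z, G.Pstep x z * Pn G n z y

/-- The heat kernel `p_n(x,y) = P_n(x,y)/μ(y)`. -/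
def hk (G : WeightedGraph V) (n : ℕ) (x y : V) : ℝ := G.Pn n x y / G.mu y

/-- One step of the walk killed on exiting `A`. -/
def PstepA (G : WeightedGraph V) (A : Set V) (x y : V) : ℝ :=
  if x ∈ A ∧ y ∈ A then G.Pstep x y else 0

/-- `n`-step transition probability of the killed walk. -/
def PnA (G : WeightedGraph V) (A : Set V) : ℕ → V → V → ℝ
  | 0, x, y => if x = y ∧ x ∈ A then 1 else 0
  | n + 1, x, y => ∑' z, G.PstepA A x z * PnA G A n z y

/-- The local Green kernel `g^A(y,z) = (Σ_k P_k^A(y,z))/μ(z)`. -/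
def green (G : WeightedGraph V) (A : Set V) (y z : V) : ℝ :=
  (∑' k, G.PnA A k y z) / G.mu z

/-- The mean exit time `E_z(A) = Σ_{k≥0} P_z(T_A > k) = Σ_k Σ_{y} P_k^A(z,y)`. -/
def meanExit (G : WeightedGraph V) (A : Set V) (z : V) : ℝ :=
  ∑' (k : ℕ), ∑' (y : V), G.PnA A k z y

/-- `E(x,r)`: the mean exit time from the ball `B(x,r)` started at `x`. -/
def mexit (G : WeightedGraph V) (x : V) (r : ℝ) : ℝ := G.meanExit (G.ball x r) x

/-- `e(x,t) = min{R ∈ ℕ : E(x,R) ≥ t}`, the inverse of the mean exit time. -/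
def einv (G : WeightedGraph V) (x : V) (t : ℝ) : ℕ := sInf {R : ℕ | t ≤ G.mexit x R}

/-- `P(T_A < n)` for the walk started at `z`. -/
def exitProbLT (G : WeightedGraph V) (A : Set V) (z : V) (n : ℕ) : ℝ :=
  1 - ∑' y, G.PnA A (n - 1) z y

/-- The local sub-Gaussian kernel `k̲(x,n,R)`. -/
def lker (G : WeightedGraph V) (x : V) (n R : ℕ) : ℕ :=
  sSup {k : ℕ | 1 ≤ k ∧ (n : ℝ) / (k : ℝ) ≤ ⨅ y : G.ball x R, G.mexit y.1 ((R / k : ℕ) : ℝ)}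

/-- `u` is harmonic on `A`. -/
def Harmonic (G : WeightedGraph V) (A : Set V) (u : V → ℝ) : Prop :=
  ∀ x ∈ A, (∑' y, G.Pstep x y * u y) = u x

/-- The Dirichlet form (energy). -/
def dirichletEnergy (G : WeightedGraph V) (f : V → ℝ) : ℝ :=
  (1 / 2) * ∑' p : V × V, G.w p.1 p.2 * (f p.1 - f p.2) ^ 2

/-- The resistance between two disjoint sets. -/
def resistance (G : WeightedGraph V) (A B : Set V) : ℝ :=
  (sInf (G.dirichletEnergy '' {f | (∀ x ∈ A, f x = 1) ∧ ∀ x ∈ B, f x = 0}))⁻¹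

/-- The resistance of the annulus `ρ(x,s,r) = ρ(B(x,s), Γ∖B(x,r))`. -/
def rho (G : WeightedGraph V) (x : V) (s r : ℝ) : ℝ :=
  G.resistance (G.ball x s) (G.ball x r)ᶜ

/-- The kernel of the `(λ,m)`-resolvent `((λ+1)I - P)^{-m}`. -/
def resolventKer (G : WeightedGraph V) (lam : ℝ) (m : ℕ) (x y : V) : ℝ :=
  (∑' k : ℕ, (Nat.choose (k + m - 1) k : ℝ) * (1 + lam) ^ (-((m : ℤ) + (k : ℤ))) * G.Pn k x y) /
    G.mu y

/-- `F(R) = inf_x E(x,R)`. -/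
def Fm (G : WeightedGraph V) (R : ℕ) : ℝ := ⨅ x : V, G.mexit x R

/-- Condition `(p0)`: controlled weights. -/
def P0 (G : WeightedGraph V) (p0 : ℝ) : Prop :=
  ∀ x y : V, 0 < G.w x y → p0 ≤ G.w x y / G.mu x

/-- Condition `(VD)`: volume doubling. -/
def VD (G : WeightedGraph V) : Prop :=
  ∃ D : ℝ, 0 < D ∧ ∀ (x : V) (R : ℝ), 0 < R → G.vol x (2 * R) ≤ D * G.vol x R

/-- Condition `(TC)`: the time comparison principle. -/
def TC (G : WeightedGraph V) : Prop :=
  ∃ C : ℝ, 1 < C ∧ ∀ (x : V) (R : ℝ), 0 < R → ∀ y ∈ G.ball x R,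
    G.mexit x (2 * R) ≤ C * G.mexit y R

/-- Condition `(TD)`: time doubling. -/
def TD (G : WeightedGraph V) : Prop :=
  ∃ D : ℝ, 0 < D ∧ ∀ (x : V) (R : ℝ), 0 ≤ R → G.mexit x (2 * R) ≤ D * G.mexit x R

/-- Condition `(E)`: the mean exit time is uniform in the space. -/
def UniformE (G : WeightedGraph V) : Prop :=
  ∃ C : ℝ, 1 < C ∧ ∀ (x y : V) (R : ℝ), 0 < R → G.mexit x R ≤ C * G.mexit y R

/-- The mean value inequality `(MV)`. -/
def MV (G : WeightedGraph V) : Prop :=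
  ∃ C : ℝ, 0 < C ∧ ∀ (x : V) (R : ℝ) (u : V → ℝ), 0 < R → (∀ y, 0 ≤ u y) →
    G.Harmonic (G.ball x R) u →
    u x ≤ C / G.vol x R * ∑' y : G.ball x R, u y.1 * G.mu y.1

/-- The local diagonal upper estimate `(DUE)`. -/
def DUE (G : WeightedGraph V) : Prop :=
  ∃ C : ℝ, 0 < C ∧ ∀ (x : V) (n : ℕ), 0 < n →
    G.hk n x x ≤ C / G.vol x (G.einv x n)

/-- The off-diagonal upper estimate `(UE)`. -/
def UE (G : WeightedGraph V) : Prop :=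
  ∃ C β c : ℝ, 0 < C ∧ 1 < β ∧ 0 < c ∧ ∀ (x y : V) (n : ℕ), 0 < n →
    G.hk n x y ≤ C / G.vol x (G.einv x n) *
      Real.exp (-(c * (G.mexit x (G.gdist x y) / n) ^ ((1 : ℝ) / (β - 1))))

/-- A nonnegative Dirichlet solution of the heat equation `P^A u_n = u_{n+1}` up to time `N`. -/
def DirSol (G : WeightedGraph V) (A : Set V) (N : ℕ) (u : ℕ → V → ℝ) : Prop :=
  (∀ n y, 0 ≤ u n y) ∧ ∀ n, n < N → ∀ z ∈ A, (∑' y, G.PstepA A z y * u n y) = u (n + 1) z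

/-- The parabolic mean value inequality `(PMV)`. -/
def PMV (G : WeightedGraph V) : Prop :=
  ∃ c1 c2 C : ℝ, 0 ≤ c1 ∧ c1 < c2 ∧ 1 < C ∧
    ∀ (x : V) (R : ℝ) (u : ℕ → V → ℝ), 0 < R →
      G.DirSol (G.ball x R) ⌊c2 * G.mexit x R⌋₊ u →
      u ⌊c2 * G.mexit x R⌋₊ x ≤ C / (G.vol x R * G.mexit x R) *
        ∑ i ∈ Finset.Icc ⌊c1 * G.mexit x R⌋₊ ⌊c2 * G.mexit x R⌋₊,
          ∑' y : G.ball x R, u i y.1 * G.mu y.1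

/-- The skewed parabolic mean value inequality. -/
def SPMV (G : WeightedGraph V) : Prop :=
  ∃ c1 c2 C : ℝ, 0 < c1 ∧ c1 < c2 ∧ 1 ≤ C ∧
    ∀ (x : V) (R : ℝ) (y : V) (u : ℕ → V → ℝ), 0 < R → y ∈ G.ball x R →
      G.DirSol (G.ball x R) ⌊c2 * G.mexit x R⌋₊ u →
      u ⌊c2 * G.mexit x R⌋₊ x ≤ C / (G.vol y (2 * R) * G.mexit y (2 * R)) *
        ∑ i ∈ Finset.Icc ⌊c1 * G.mexit x R⌋₊ ⌊c2 * G.mexit x R⌋₊,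
          ∑' z : G.ball x R, u i z.1 * G.mu z.1

/-- The mean value property for Green kernels `(MVG)`. -/
def MVG (G : WeightedGraph V) : Prop :=
  ∃ C : ℝ, 1 < C ∧ ∀ (x : V) (R : ℝ) (y : V), 0 < R → 0 < G.gdist x y →
    G.green (G.ball x R) y x ≤ C / G.vol x (G.gdist x y) *
      ∑' z : G.ball x (G.gdist x y : ℝ), G.green (G.ball x R) y z.1 * G.mu z.1

/-- The Green kernel bound `(g01)`: `g^B(y,x) ≤ C·E(x,R)/V(x,d(x,y))`. -/
def G01 (G : WeightedGraph V) : Prop :=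
  ∃ C : ℝ, 1 < C ∧ ∀ (x : V) (R : ℝ) (y : V), 0 < R → 0 < G.gdist x y →
    G.green (G.ball x R) y x ≤ C * G.mexit x R / G.vol x (G.gdist x y)

/-- The elliptic Harnack inequality `(H)`. -/
def EH (G : WeightedGraph V) : Prop :=
  ∃ C : ℝ, 0 < C ∧ ∀ (x : V) (R : ℝ) (u : V → ℝ), 0 < R → (∀ y, 0 ≤ u y) →
    G.Harmonic (G.ball x (2 * R)) u → ∀ y ∈ G.ball x R, ∀ z ∈ G.ball x R, u y ≤ C * u z

/-- The sub-Gaussian upper estimate `(UE_F)` with respect to `F`. -/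
def UEF (G : WeightedGraph V) (F : ℕ → ℝ) : Prop :=
  ∃ C c : ℝ, 0 < C ∧ 0 < c ∧ ∀ (x y : V) (n : ℕ), 0 < n →
    G.hk n x y ≤ C / G.vol x (finvF F n) *
      Real.exp (-(c * (kkerF F n (G.gdist x y) : ℝ)))

/-- The sub-Gaussian lower estimate `(LE_F)` with respect to `F`. -/
def LEF (G : WeightedGraph V) (F : ℕ → ℝ) : Prop :=
  ∃ c C : ℝ, 0 < c ∧ 0 < C ∧ ∀ (x y : V) (n : ℕ), 0 < n →
    c / G.vol x (finvF F n) * Real.exp (-(C * (kkerF F n (G.gdist x y) : ℝ))) ≤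
      G.hk n x y + G.hk (n + 1) x y

/-- The `F`-parabolic Harnack inequality. -/
def PHF (G : WeightedGraph V) (F : ℕ → ℝ) : Prop :=
  ∀ c1 c2 c3 c4 η : ℝ, 0 < c1 → c1 < c2 → c2 < c3 → c3 < c4 → 0 < η → η < 1 →
    ∃ CH : ℝ, 0 < CH ∧ ∀ (x : V) (R k : ℕ) (u : ℕ → V → ℝ), 0 < R →
      (∀ n y, 0 ≤ u n y) →
      (∀ n : ℕ, k ≤ n → (n : ℝ) < (k : ℝ) + F ⌊c4 * (R : ℝ)⌋₊ → ∀ z ∈ G.ball x R,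
        (∑' y, G.Pstep z y * u n y) = u (n + 1) z) →
      ∀ (nm np : ℕ), ∀ xm ∈ G.ball x (η * R), ∀ xp ∈ G.ball x (η * R),
        (k : ℝ) + F ⌊c1 * (R : ℝ)⌋₊ ≤ (nm : ℝ) → (nm : ℝ) ≤ (k : ℝ) + F ⌊c2 * (R : ℝ)⌋₊ →
        (k : ℝ) + F ⌊c3 * (R : ℝ)⌋₊ ≤ (np : ℝ) → (np : ℝ) ≤ (k : ℝ) + F ⌊c4 * (R : ℝ)⌋₊ →
        (G.gdist xm xp : ℝ) ≤ (np : ℝ) - (nm : ℝ) →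
        u nm xm ≤ CH * (u np xp + u (np + 1) xp)

end WeightedGraph

open WeightedGraph

/-!
Iterating (TC) along dyadic radii gives the polynomial bound `E(x,R) ≤ (4R/S)^β E(y,S)` for
`y ∈ B(x,R)` and `S ≤ R`, with `β = log₂ C_T`. This uses that `E(x,·)` is monotone, which holds
because the walk killed outside a finite ball survives with geometrically decaying probability:
by (p0) it is pushed out within a bounded number of steps with probability at least a power of
`p0`. With `K = k̲ + 1`: if `K ≤ R`, maximality of `k̲` gives `y ∈ B(x,R)` with
`E(y, ⌊R/K⌋) < n/K`, and the polynomial bound yields `E(x,R)/n ≤ (8K)^β`; if `K > R`, the same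
follows from `E(x,R) ≤ (4R)^β E(x,1) = (4R)^β`. So `c = 1/8` and the exponent `β + 1` work.
-/

theorem summable_pow_div {θ : ℝ} (h0 : 0 ≤ θ) (h1 : θ < 1) (N : ℕ) [NeZero N] :
    Summable fun k : ℕ => θ ^ (k / N) := by
  have hprod : Summable fun p : ℕ × Fin N => θ ^ p.1 * 1 :=
    (summable_geometric_of_lt_one h0 h1).mul_of_nonneg Summable.of_finite
      (fun j => pow_nonneg h0 j) (fun _ => zero_le_one)
  rw [← (Nat.divModEquiv N).symm.summable_iff]
  refine hprod.congr fun p => ?_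
  have hdiv : (p.1 * N + p.2) / N = p.1 := by
    rw [Nat.add_comm, Nat.add_mul_div_right _ _ (NeZero.pos N), Nat.div_eq_of_lt p.2.is_lt,
      zero_add]
  simp [hdiv]

theorem Nat.le_two_mul_mul_div {K R : ℕ} (hK : 0 < K) (hKR : K ≤ R) : R ≤ 2 * K * (R / K) := by
  have h1 : K * (R / K) + R % K = R := Nat.div_add_mod R K
  have h2 : R % K < K := Nat.mod_lt R hK
  have h3 : K ≤ K * (R / K) := Nat.le_mul_of_pos_right K (Nat.div_pos hKR hK)
  rw [mul_assoc]
  omega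

theorem le_two_pow_ceil_logb {t : ℝ} (ht : 0 < t) : t ≤ 2 ^ ⌈Real.logb 2 t⌉₊ := by
  calc t = 2 ^ Real.logb 2 t := (Real.rpow_logb two_pos (by norm_num) ht).symm
    _ ≤ 2 ^ (⌈Real.logb 2 t⌉₊ : ℝ) :=
        Real.rpow_le_rpow_of_exponent_le one_le_two (Nat.le_ceil _)
    _ = 2 ^ ⌈Real.logb 2 t⌉₊ := Real.rpow_natCast 2 _

theorem pow_ceil_logb_le {C t : ℝ} (hC : 1 ≤ C) (ht : 1 ≤ t) :
    C ^ ⌈Real.logb 2 t⌉₊ ≤ (2 * t) ^ Real.logb 2 C := by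
  set m := ⌈Real.logb 2 t⌉₊
  have hβ : 0 ≤ Real.logb 2 C := Real.logb_nonneg one_lt_two hC
  have hm : (m : ℝ) < Real.logb 2 t + 1 :=
    Nat.ceil_lt_add_one (Real.logb_nonneg one_lt_two ht)
  have h2m : (2 : ℝ) ^ m ≤ 2 * t :=
    calc (2 : ℝ) ^ m = 2 ^ (m : ℝ) := (Real.rpow_natCast 2 m).symm
      _ ≤ 2 ^ (Real.logb 2 t + 1) := Real.rpow_le_rpow_of_exponent_le one_le_two hm.le
      _ = 2 * t := by
        rw [Real.rpow_add_one two_ne_zero, Real.rpow_logb two_pos (by norm_num) (by linarith),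
          mul_comm]
  calc C ^ m = (2 ^ Real.logb 2 C) ^ m := by
        rw [Real.rpow_logb two_pos (by norm_num) (by linarith)]
    _ = ((2 : ℝ) ^ m) ^ Real.logb 2 C := by
        rw [← Real.rpow_mul_natCast zero_le_two, mul_comm, Real.rpow_natCast_mul zero_le_two]
    _ ≤ (2 * t) ^ Real.logb 2 C := Real.rpow_le_rpow (by positivity) h2m hβ

namespace WeightedGraph

variable {V : Type*} (G : WeightedGraph V)

section RandomWalk

theorem Pstep_nonneg (x y : V) : 0 ≤ G.Pstep x y :=
  div_nonneg (G.w_nonneg x y) (tsum_nonneg (G.w_nonneg x))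

theorem summable_Pstep_mul (x : V) (f : V → ℝ) : Summable fun y => G.Pstep x y * f y := by
  refine summable_of_hasFiniteSupport ((G.locFin x).subset fun y hy => ?_)
  have hw : G.w x y ≠ 0 := fun h => hy (by simp [Pstep, h])
  exact lt_of_le_of_ne (G.w_nonneg x y) (Ne.symm hw)

theorem tsum_Pstep_le_one (x : V) : ∑' y, G.Pstep x y ≤ 1 := by
  simp only [Pstep, tsum_div_const]
  exact div_self_le_one _

theorem Pstep_le_one (x y : V) : G.Pstep x y ≤ 1 := by
  refine le_trans ?_ (G.tsum_Pstep_le_one x)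
  simpa using (G.summable_Pstep_mul x fun _ => 1).le_tsum y fun v _ => by
    simpa using G.Pstep_nonneg x v

theorem tsum_Pstep_mul_le {f : V → ℝ} (hf : ∀ v, f v ≤ 1) (x y : V) :
    ∑' v, G.Pstep x v * f v ≤ 1 - G.Pstep x y * (1 - f y) := by
  have hsplit : ∑' v, G.Pstep x v * f v
      = ∑' v, G.Pstep x v * 1 - ∑' v, G.Pstep x v * (1 - f v) := by
    rw [← (G.summable_Pstep_mul x fun _ => 1).tsum_sub (G.summable_Pstep_mul x fun v => 1 - f v)]
    exact tsum_congr fun v => by ring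
  have hy : G.Pstep x y * (1 - f y) ≤ ∑' v, G.Pstep x v * (1 - f v) :=
    (G.summable_Pstep_mul x fun v => 1 - f v).le_tsum y fun v _ =>
      mul_nonneg (G.Pstep_nonneg x v) (sub_nonneg.mpr (hf v))
  have hone : ∑' v, G.Pstep x v * 1 ≤ 1 := by simpa using G.tsum_Pstep_le_one x
  linarith

end RandomWalk

section KilledWalk

variable {A : Set V}

theorem PstepA_nonneg (x y : V) : 0 ≤ G.PstepA A x y := by
  unfold PstepA
  split_ifs
  exacts [G.Pstep_nonneg x y, le_rfl]

theorem PnA_nonneg (k : ℕ) (x y : V) : 0 ≤ G.PnA A k x y := by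
  induction k generalizing x with
  | zero => unfold PnA; split_ifs <;> norm_num
  | succ k ih => exact tsum_nonneg fun w => mul_nonneg (G.PstepA_nonneg x w) (ih w)

theorem PnA_of_notMem_left {x : V} (hx : x ∉ A) (k : ℕ) (y : V) : G.PnA A k x y = 0 := by
  cases k with
  | zero => simp [PnA, hx]
  | succ k => simp [PnA, PstepA, hx]

theorem PnA_of_notMem_right {y : V} (hy : y ∉ A) (k : ℕ) (x : V) : G.PnA A k x y = 0 := by
  induction k generalizing x with
  | zero =>
    simp only [PnA]
    exact if_neg fun h : x = y ∧ x ∈ A => hy (h.1 ▸ h.2)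
  | succ k ih => simp [PnA, ih]

/-- `P_z(T_A > k)`. -/
def survival (A : Set V) (k : ℕ) (z : V) : ℝ := ∑' y, G.PnA A k z y

theorem survival_nonneg (k : ℕ) (z : V) : 0 ≤ G.survival A k z :=
  tsum_nonneg (G.PnA_nonneg k z)

theorem survival_of_notMem {z : V} (hz : z ∉ A) (k : ℕ) : G.survival A k z = 0 := by
  simp [survival, G.PnA_of_notMem_left hz]

theorem survival_zero_of_mem {z : V} (hz : z ∈ A) : G.survival A 0 z = 1 := by
  rw [survival, tsum_eq_single z fun y hy => by simp [PnA, Ne.symm hy]]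
  simp [PnA, hz]

theorem survival_succ (hA : A.Finite) {z : V} (hz : z ∈ A) (k : ℕ) :
    G.survival A (k + 1) z = ∑' w, G.Pstep z w * G.survival A k w := by
  have hkill : ∀ w y, G.PstepA A z w * G.PnA A k w y = G.Pstep z w * G.PnA A k w y := by
    intro w y
    by_cases hw : w ∈ A
    · simp [PstepA, hz, hw]
    · simp [G.PnA_of_notMem_left hw]
  have hsummable : Summable (Function.uncurry fun w y => G.Pstep z w * G.PnA A k w y) := by
    refine summable_of_hasFiniteSupport (((G.locFin z).prod hA).subset fun p hp => ?_)
    obtain ⟨hP, hPnA⟩ := mul_ne_zero_iff.mp hp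
    refine ⟨lt_of_le_of_ne (G.w_nonneg z p.1) fun h => hP ?_, ?_⟩
    · simp [Pstep, ← h]
    · by_contra hy
      exact hPnA (G.PnA_of_notMem_right hy k p.1)
  calc G.survival A (k + 1) z = ∑' y, ∑' w, G.Pstep z w * G.PnA A k w y := by
        simp_rw [← hkill]
        rfl
    _ = ∑' w, G.Pstep z w * G.survival A k w := by
        rw [hsummable.tsum_comm]
        simp_rw [tsum_mul_left]
        rfl

theorem survival_le_one (hA : A.Finite) (k : ℕ) (z : V) : G.survival A k z ≤ 1 := by
  induction k generalizing z with
  | zero =>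
    by_cases hz : z ∈ A
    · exact (G.survival_zero_of_mem hz).le
    · simp [G.survival_of_notMem hz]
  | succ k ih =>
    by_cases hz : z ∈ A
    · rw [G.survival_succ hA hz]
      exact (G.tsum_Pstep_mul_le ih z z).trans
        (sub_le_self _ (mul_nonneg (G.Pstep_nonneg z z) (sub_nonneg.mpr (ih z))))
    · simp [G.survival_of_notMem hz]

theorem survival_antitone (hA : A.Finite) (z : V) : Antitone fun k => G.survival A k z := by
  refine antitone_nat_of_succ_le fun k => ?_
  induction k generalizing z with
  | zero =>
    by_cases hz : z ∈ A
    · rw [G.survival_zero_of_mem hz]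
      exact G.survival_le_one hA 1 z
    · simp [G.survival_of_notMem hz]
  | succ k ih =>
    by_cases hz : z ∈ A
    · rw [G.survival_succ hA hz, G.survival_succ hA hz]
      exact (G.summable_Pstep_mul z _).tsum_le_tsum
        (fun w => mul_le_mul_of_nonneg_left (ih w) (G.Pstep_nonneg z w))
        (G.summable_Pstep_mul z _)
    · simp [G.survival_of_notMem hz]

/-- The Markov property at time `k`, in the form of an inequality. -/
theorem survival_add_le (hA : A.Finite) {k : ℕ} {M : ℝ} (h : ∀ w ∈ A, G.survival A k w ≤ M)
    (m : ℕ) (z : V) : G.survival A (k + m) z ≤ M * G.survival A m z := by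
  induction m generalizing z with
  | zero =>
    by_cases hz : z ∈ A
    · simpa [G.survival_zero_of_mem hz] using h z hz
    · simp [G.survival_of_notMem hz]
  | succ m ih =>
    by_cases hz : z ∈ A
    · rw [← add_assoc, G.survival_succ hA hz, G.survival_succ hA hz, ← tsum_mul_left]
      refine (G.summable_Pstep_mul z _).tsum_le_tsum (fun w => ?_)
        ((G.summable_Pstep_mul z _).mul_left M)
      calc G.Pstep z w * G.survival A (k + m) w ≤ G.Pstep z w * (M * G.survival A m w) :=
            mul_le_mul_of_nonneg_left (ih w) (G.Pstep_nonneg z w)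
        _ = M * (G.Pstep z w * G.survival A m w) := by ring
    · simp [G.survival_of_notMem hz]

theorem survival_le_of_subset {A' : Set V} (hA' : A'.Finite) (hAA' : A ⊆ A') (k : ℕ) (z : V) :
    G.survival A k z ≤ G.survival A' k z := by
  induction k generalizing z with
  | zero =>
    by_cases hz : z ∈ A
    · rw [G.survival_zero_of_mem hz, G.survival_zero_of_mem (hAA' hz)]
    · simpa [G.survival_of_notMem hz] using G.survival_nonneg 0 z
  | succ k ih =>
    by_cases hz : z ∈ A
    · rw [G.survival_succ (hA'.subset hAA') hz, G.survival_succ hA' (hAA' hz)]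
      exact (G.summable_Pstep_mul z _).tsum_le_tsum
        (fun w => mul_le_mul_of_nonneg_left (ih w) (G.Pstep_nonneg z w))
        (G.summable_Pstep_mul z _)
    · simpa [G.survival_of_notMem hz] using G.survival_nonneg (k + 1) z

end KilledWalk

section Escape

variable {A : Set V} {p0 : ℝ}

theorem P0.le_one {G : WeightedGraph V} (hP0 : G.P0 p0) {x y : V}
    (h : G.toSimpleGraph.Adj x y) : p0 ≤ 1 :=
  (hP0 x y h).trans (G.Pstep_le_one x y)

/-- By (p0) the walk follows each edge of `p` with probability at least `p0`. -/
theorem survival_length_le (hA : A.Finite) (hp0 : 0 ≤ p0) (hP0 : G.P0 p0) {z u : V}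
    (p : G.toSimpleGraph.Walk z u) (hu : u ∉ A) :
    G.survival A p.length z ≤ 1 - p0 ^ p.length := by
  induction p with
  | nil => simp [G.survival_of_notMem hu]
  | @cons a b c hab q ih =>
    rw [SimpleGraph.Walk.length_cons]
    by_cases ha : a ∈ A
    · rw [G.survival_succ hA ha]
      refine (G.tsum_Pstep_mul_le (G.survival_le_one hA q.length) a b).trans ?_
      have hstep : p0 ^ (q.length + 1) ≤ G.Pstep a b * (1 - G.survival A q.length b) := by
        rw [pow_succ']
        exact mul_le_mul (hP0 a b hab) (by linarith [ih hu]) (pow_nonneg hp0 _)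
          (G.Pstep_nonneg a b)
      linarith
    · rw [G.survival_of_notMem ha, sub_nonneg]
      exact pow_le_one₀ hp0 (hP0.le_one hab)

theorem exists_survival_le [Infinite V] (hconn : G.toSimpleGraph.Connected) (hA : A.Finite)
    (hp0 : 0 ≤ p0) (hP0 : G.P0 p0) : ∃ N, 0 < N ∧ ∀ z ∈ A, G.survival A N z ≤ 1 - p0 ^ N := by
  obtain ⟨u, hu⟩ := hA.infinite_compl.nonempty
  refine ⟨hA.toFinset.sup (G.toSimpleGraph.dist · u) + 1, Nat.succ_pos _, fun z hz => ?_⟩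
  obtain ⟨p, hp⟩ := hconn.exists_walk_length_eq_dist z u
  obtain ⟨w, hzw, -, -⟩ := SimpleGraph.Walk.exists_eq_cons_of_ne (ne_of_mem_of_not_mem hz hu) p
  have hlen : p.length ≤ hA.toFinset.sup (G.toSimpleGraph.dist · u) + 1 :=
    hp ▸ (Finset.le_sup (f := (G.toSimpleGraph.dist · u)) (hA.mem_toFinset.mpr hz)).trans
      (Nat.le_succ _)
  calc G.survival A _ z ≤ G.survival A p.length z := G.survival_antitone hA z hlen
    _ ≤ 1 - p0 ^ p.length := G.survival_length_le hA hp0 hP0 p hu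
    _ ≤ 1 - p0 ^ _ := sub_le_sub_left (pow_le_pow_of_le_one hp0 (hP0.le_one hzw) hlen) 1

theorem survival_le_pow_div (hA : A.Finite) {N : ℕ} {θ : ℝ} (hθ : 0 ≤ θ)
    (h : ∀ z ∈ A, G.survival A N z ≤ θ) (k : ℕ) (z : V) :
    G.survival A k z ≤ θ ^ (k / N) := by
  have hblock : ∀ j z, G.survival A (N * j) z ≤ θ ^ j := by
    intro j
    induction j with
    | zero => simpa using G.survival_le_one hA 0
    | succ j ih =>
      intro z
      calc G.survival A (N * (j + 1)) z = G.survival A (N + N * j) z := by ring_nf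
        _ ≤ θ * G.survival A (N * j) z := G.survival_add_le hA h _ z
        _ ≤ θ * θ ^ j := mul_le_mul_of_nonneg_left (ih z) hθ
        _ = θ ^ (j + 1) := (pow_succ' θ j).symm
  exact (G.survival_antitone hA z (Nat.mul_div_le k N)).trans (hblock _ z)

theorem summable_survival [Infinite V] (hconn : G.toSimpleGraph.Connected) (hA : A.Finite)
    (hp0 : 0 < p0) (hP0 : G.P0 p0) (z : V) : Summable fun k => G.survival A k z := by
  obtain ⟨N, hN, hsurv⟩ := G.exists_survival_le hconn hA hp0.le hP0
  have : NeZero N := ⟨hN.ne'⟩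
  have hθ : max (1 - p0 ^ N) 0 < 1 := max_lt (by linarith [pow_pos hp0 N]) one_pos
  exact (summable_pow_div (le_max_right _ _) hθ N).of_nonneg_of_le (G.survival_nonneg · z)
    (G.survival_le_pow_div hA (le_max_right _ _)
      (fun w hw => (hsurv w hw).trans (le_max_left _ _)) · z)

end Escape

section MeanExitTime

theorem meanExit_le_of_subset {A A' : Set V} (hA' : A'.Finite) (hAA' : A ⊆ A') {z : V}
    (hsum : Summable fun k => G.survival A' k z) : G.meanExit A z ≤ G.meanExit A' z :=
  (hsum.of_nonneg_of_le (G.survival_nonneg · z)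
    (G.survival_le_of_subset hA' hAA' · z)).tsum_le_tsum
      (G.survival_le_of_subset hA' hAA' · z) hsum

theorem meanExit_singleton (x : V) : G.meanExit {x} x = 1 := by
  have hstep : ∀ k, G.survival {x} (k + 1) x = 0 := fun k => by
    rw [G.survival_succ (Set.finite_singleton x) rfl]
    refine (tsum_congr fun w => ?_).trans tsum_zero
    by_cases hw : w = x
    · simp [hw, Pstep, G.w_irrefl]
    · simp [G.survival_of_notMem (Set.mem_singleton_iff.not.mpr hw)]
  rw [meanExit, tsum_eq_single 0 fun k hk => ?_]
  · exact G.survival_zero_of_mem rfl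
  · obtain ⟨k, rfl⟩ := Nat.exists_eq_succ_of_ne_zero hk
    exact hstep k

theorem finite_setOf_gdist_le (hconn : G.toSimpleGraph.Connected) (x : V) (m : ℕ) :
    {y | G.gdist x y ≤ m}.Finite := by
  induction m generalizing x with
  | zero =>
    refine (Set.finite_singleton x).subset fun y hy => ?_
    exact ((hconn.dist_eq_zero_iff).mp (Nat.le_zero.mp hy)).symm
  | succ m ih =>
    refine ((Set.finite_singleton x).union ((G.locFin x).biUnion fun z _ => ih z)).subset ?_
    intro y hy
    by_cases hxy : x = y
    · exact Or.inl hxy.symm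
    obtain ⟨p, hp⟩ := hconn.exists_walk_length_eq_dist x y
    obtain ⟨z, hxz, q, rfl⟩ := SimpleGraph.Walk.exists_eq_cons_of_ne hxy p
    refine Or.inr (Set.mem_biUnion (x := z) hxz ?_)
    have : q.length + 1 ≤ m + 1 := by
      rw [← SimpleGraph.Walk.length_cons hxz q, hp]
      exact hy
    exact (SimpleGraph.dist_le q).trans (by omega)

theorem ball_finite (hconn : G.toSimpleGraph.Connected) (x : V) (r : ℝ) : (G.ball x r).Finite :=
  (G.finite_setOf_gdist_le hconn x ⌈r⌉₊).subset fun _ hy =>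
    Nat.cast_le.mp ((le_of_lt hy).trans (Nat.le_ceil r))

theorem mem_ball_self (x : V) {r : ℝ} (hr : 0 < r) : x ∈ G.ball x r := by
  simpa [ball, gdist] using hr

theorem ball_eq_singleton (hconn : G.toSimpleGraph.Connected) (x : V) {r : ℝ} (hr0 : 0 < r)
    (hr1 : r ≤ 1) : G.ball x r = {x} := by
  refine Set.Subset.antisymm (fun y hy => ?_)
    (Set.singleton_subset_iff.mpr (G.mem_ball_self x hr0))
  have hxy : G.gdist x y = 0 := by
    have : (G.gdist x y : ℝ) < 1 := lt_of_lt_of_le hy hr1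
    exact_mod_cast Nat.lt_one_iff.mp (by exact_mod_cast this)
  exact ((hconn.dist_eq_zero_iff).mp hxy).symm

theorem mexit_nonneg (x : V) (r : ℝ) : 0 ≤ G.mexit x r :=
  tsum_nonneg (G.survival_nonneg · x)

theorem mexit_zero (x : V) : G.mexit x 0 = 0 := by
  have hempty : G.ball x 0 = ∅ := Set.eq_empty_of_forall_notMem fun y (hy : (_ : ℝ) < 0) =>
    (Nat.cast_nonneg (G.gdist x y)).not_gt hy
  simp only [mexit, hempty]
  exact (tsum_congr fun k => G.survival_of_notMem (Set.notMem_empty x) k).trans tsum_zero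

theorem mexit_eq_one (hconn : G.toSimpleGraph.Connected) (x : V) {r : ℝ} (hr0 : 0 < r)
    (hr1 : r ≤ 1) : G.mexit x r = 1 := by
  rw [mexit, G.ball_eq_singleton hconn x hr0 hr1, G.meanExit_singleton]

theorem mexit_mono [Infinite V] (hconn : G.toSimpleGraph.Connected) {p0 : ℝ} (hp0 : 0 < p0)
    (hP0 : G.P0 p0) (x : V) {r r' : ℝ} (h : r ≤ r') : G.mexit x r ≤ G.mexit x r' :=
  G.meanExit_le_of_subset (G.ball_finite hconn x r') (fun _ hy => lt_of_lt_of_le hy h)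
    (G.summable_survival hconn (G.ball_finite hconn x r') hp0 hP0 x)

end MeanExitTime

section TimeComparison

variable {C : ℝ}
  (hC : ∀ (x : V) (R : ℝ), 0 < R → ∀ y ∈ G.ball x R, G.mexit x (2 * R) ≤ C * G.mexit y R)
include hC

theorem mexit_two_pow_mul_le (hC0 : 0 ≤ C) (y : V) {S : ℝ} (hS : 0 < S) (m : ℕ) :
    G.mexit y (2 ^ m * S) ≤ C ^ m * G.mexit y S := by
  induction m with
  | zero => simp
  | succ m ih =>
    calc G.mexit y (2 ^ (m + 1) * S) = G.mexit y (2 * (2 ^ m * S)) := by ring_nf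
      _ ≤ C * G.mexit y (2 ^ m * S) := hC y _ (by positivity) y (G.mem_ball_self y (by positivity))
      _ ≤ C * (C ^ m * G.mexit y S) := mul_le_mul_of_nonneg_left ih hC0
      _ = C ^ (m + 1) * G.mexit y S := by ring

/-- Apply (TC) once at `x` with a dyadic radius `2^m S ≥ R`, then `m = ⌈log₂ (R/S)⌉` times
at `y`. -/
theorem mexit_le_rpow_mul [Infinite V] (hconn : G.toSimpleGraph.Connected) {p0 : ℝ}
    (hp0 : 0 < p0) (hP0 : G.P0 p0) (hC1 : 1 < C) {x y : V} {R S : ℝ} (hy : y ∈ G.ball x R)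
    (hS : 0 < S) (hSR : S ≤ R) :
    G.mexit x R ≤ (4 * R / S) ^ Real.logb 2 C * G.mexit y S := by
  set β := Real.logb 2 C
  set m := ⌈Real.logb 2 (R / S)⌉₊
  have hRS : 1 ≤ R / S := (one_le_div hS).mpr hSR
  have hRm : R ≤ 2 ^ m * S := (div_le_iff₀ hS).mp (le_two_pow_ceil_logb (by linarith))
  have hmS : 0 < 2 ^ m * S := by positivity
  have hCβ : C = 2 ^ β := (Real.rpow_logb two_pos (by norm_num) (by linarith)).symm
  calc G.mexit x R ≤ G.mexit x (2 * (2 ^ m * S)) := G.mexit_mono hconn hp0 hP0 x (by linarith)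
    _ ≤ C * G.mexit y (2 ^ m * S) := hC x _ hmS y (lt_of_lt_of_le hy hRm)
    _ ≤ C * (C ^ m * G.mexit y S) :=
      mul_le_mul_of_nonneg_left (G.mexit_two_pow_mul_le hC (by linarith) y hS m) (by linarith)
    _ ≤ C * ((2 * (R / S)) ^ β * G.mexit y S) := by
      gcongr
      · exact G.mexit_nonneg y S
      · exact pow_ceil_logb_le hC1.le hRS
    _ = (4 * R / S) ^ β * G.mexit y S := by
      rw [← mul_assoc, hCβ, ← Real.mul_rpow zero_le_two (by positivity)]
      ring_nf

end TimeComparison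

/-- The set defining `k̲` is bounded by `R` since `E(y, 0) = 0`, so `k̲ + 1` lies outside it. -/
theorem exists_mexit_lt_of_lker_succ (x : V) {n R : ℕ} (hn : 0 < n) (hR : 0 < R) :
    ∃ y ∈ G.ball x R,
      G.mexit y ((R / (G.lker x n R + 1) : ℕ) : ℝ) < n / ((G.lker x n R + 1 : ℕ) : ℝ) := by
  have : Nonempty (G.ball x R) := ⟨⟨x, G.mem_ball_self x (Nat.cast_pos.mpr hR)⟩⟩
  set K := G.lker x n R + 1
  have hbdd : BddAbove {k : ℕ | 1 ≤ k ∧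
      (n : ℝ) / (k : ℝ) ≤ ⨅ y : G.ball x R, G.mexit y.1 ((R / k : ℕ) : ℝ)} := by
    refine ⟨R, fun k ⟨hk1, hk⟩ => ?_⟩
    by_contra hkR
    rw [Nat.div_eq_of_lt (not_le.mp hkR), Nat.cast_zero] at hk
    simp only [mexit_zero, ciInf_const] at hk
    exact hk.not_gt (div_pos (Nat.cast_pos.mpr hn) (Nat.cast_pos.mpr hk1))
  have hK : ¬ ((n : ℝ) / (K : ℝ) ≤ ⨅ y : G.ball x R, G.mexit y.1 ((R / K : ℕ) : ℝ)) :=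
    fun hK => (Nat.lt_succ_self _).not_ge (le_csSup hbdd ⟨Nat.le_add_left 1 _, hK⟩)
  obtain ⟨⟨y, hy⟩, hlt⟩ := exists_lt_of_ciInf_lt (not_le.mp hK)
  exact ⟨y, hy, hlt⟩

theorem mexit_div_le_rpow_lker [Infinite V] (hconn : G.toSimpleGraph.Connected) {p0 : ℝ}
    (hp0 : 0 < p0) (hP0 : G.P0 p0) {C : ℝ} (hC1 : 1 < C)
    (hC : ∀ (x : V) (R : ℝ), 0 < R → ∀ y ∈ G.ball x R, G.mexit x (2 * R) ≤ C * G.mexit y R)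
    (x : V) {n R : ℕ} (hn : 0 < n) (hR : 0 < R) :
    G.mexit x R / n ≤ (8 * ((G.lker x n R : ℝ) + 1)) ^ Real.logb 2 C := by
  set β := Real.logb 2 C
  set K := G.lker x n R + 1
  have hKcast : ((G.lker x n R : ℝ) + 1) = K := by push_cast [K]; rfl
  rw [hKcast]
  have hβ : 0 ≤ β := (Real.logb_pos one_lt_two hC1).le
  have hn1 : (1 : ℝ) ≤ n := Nat.one_le_cast.mpr hn
  have hK1 : (1 : ℝ) ≤ K := Nat.one_le_cast.mpr (Nat.le_add_left 1 _)
  rcases lt_or_ge R K with hRK | hKR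
  · have hE : G.mexit x R ≤ (4 * R) ^ β := by
      simpa [G.mexit_eq_one hconn x one_pos le_rfl] using
        G.mexit_le_rpow_mul hC hconn hp0 hP0 hC1 (G.mem_ball_self x (Nat.cast_pos.mpr hR))
          one_pos (Nat.one_le_cast.mpr hR)
    calc G.mexit x R / n ≤ G.mexit x R := div_le_self (G.mexit_nonneg x R) hn1
      _ ≤ (4 * R) ^ β := hE
      _ ≤ (8 * K) ^ β := by
        gcongr
        have : (R : ℝ) ≤ K := by exact_mod_cast hRK.le
        linarith
  · set r := R / K
    have hr : 0 < r := Nat.div_pos hKR (Nat.succ_pos _)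
    have hRr : (R : ℝ) ≤ 2 * K * r := by
      exact_mod_cast Nat.le_two_mul_mul_div (Nat.succ_pos _) hKR
    have hr1 : (1 : ℝ) ≤ r := Nat.one_le_cast.mpr hr
    obtain ⟨y, hy, hlt⟩ : ∃ y ∈ G.ball x R, G.mexit y r < n / K :=
      G.exists_mexit_lt_of_lker_succ x hn hR
    have hE := G.mexit_le_rpow_mul hC hconn hp0 hP0 hC1 hy (by positivity)
      (Nat.cast_le.mpr (Nat.div_le_self R K))
    rw [div_le_iff₀ (by positivity)]
    calc G.mexit x R ≤ (4 * R / r) ^ β * G.mexit y r := hE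
      _ ≤ (8 * K) ^ β * (n / K) := by
        have h4R : 4 * R / r ≤ 8 * (K : ℝ) := by
          rw [div_le_iff₀ (by positivity)]
          linarith
        gcongr
        exact G.mexit_nonneg y r
      _ ≤ (8 * K) ^ β * n := by
        gcongr
        exact div_le_self (Nat.cast_nonneg n) hK1

end WeightedGraph

theorem lker_lower_bound_general {V : Type*} [Infinite V]
    (G : WeightedGraph V) (hconn : G.toSimpleGraph.Connected)
    (p0 : ℝ) (hp0 : 0 < p0) (hP0 : G.P0 p0) (hTC : G.TC) :
    ∃ c β : ℝ, 0 < c ∧ 1 < β ∧ ∀ (x : V) (n R : ℕ), 0 < n → 0 < R →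
      c * (G.mexit x (R : ℝ) / (n : ℝ)) ^ ((1 : ℝ) / (β - 1)) ≤ (G.lker x n R : ℝ) + 1 := by
  obtain ⟨C, hC1, hC⟩ := hTC
  have hβ : 0 < Real.logb 2 C := Real.logb_pos one_lt_two hC1
  refine ⟨1 / 8, Real.logb 2 C + 1, by norm_num, by linarith, fun x n R hn hR => ?_⟩
  calc 1 / 8 * (G.mexit x R / n) ^ ((1 : ℝ) / (Real.logb 2 C + 1 - 1))
      ≤ 1 / 8 * ((8 * ((G.lker x n R : ℝ) + 1)) ^ Real.logb 2 C) ^ (1 / Real.logb 2 C) := by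
        rw [add_sub_cancel_right]
        gcongr
        · exact div_nonneg (G.mexit_nonneg x R) (Nat.cast_nonneg n)
        · exact G.mexit_div_le_rpow_lker hconn hp0 hP0 hC1 hC x hn hR
    _ = (G.lker x n R : ℝ) + 1 := by
        rw [← Real.rpow_mul (by positivity), mul_one_div_cancel hβ.ne', Real.rpow_one]
        ring

/-- **Lemma 3.13.** Under `(p0)`, `(VD)` and `(TC)`, the local sub-Gaussian kernel satisfies
`k̲ + 1 ≥ c·(E(x,R)/n)^{1/(β-1)}`. -/
theorem lker_lower_bound {V : Type*} [Countable V] [Infinite V]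
    (G : WeightedGraph V) (hconn : G.toSimpleGraph.Connected)
    (p0 : ℝ) (hp0 : 0 < p0) (hP0 : G.P0 p0) (hVD : G.VD) (hTC : G.TC) :
    ∃ c β : ℝ, 0 < c ∧ 1 < β ∧ ∀ (x : V) (n R : ℕ), 0 < n → 0 < R →
      c * (G.mexit x (R : ℝ) / (n : ℝ)) ^ ((1 : ℝ) / (β - 1)) ≤ (G.lker x n R : ℝ) + 1 :=
  lker_lower_bound_general G hconn p0 hp0 hP0 hTC
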